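/- arXiv:2307.03181 — 2 statements merged into one kernel-verified Lean document; each statement's English description precedes it below -/
import Mathlib

section
/- Let Ω be a finite set, π a probability distribution on Ω × A for finite A, and suppose π satisfies the balance equations for a Markov kernel p: for all ω, ∑_{ω',a'} π(ω',a') p(ω | ω',a') = ∑_a π(ω,a). Define σ(a|ω) = π(ω,a)/∑_{a'} π(ω,a') whenever the denominator is positive. Then the marginal π̂(ω,a) := π(ω,a) is an invariant distribution of the Markov chain on Ω × A with transition probability P((ω,a) → (ω',a')) = p(ω'|ω,a)·σ(a'|ω'). -/
theorem stmt_0_general {Ω A : Type*} [Fintype Ω] [Fintype A]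
    (p : Ω → A → Ω → ℝ) (π : Ω → A → ℝ)
    (hbal : ∀ ω, ∑ ω', ∑ a', π ω' a' * p ω' a' ω = ∑ a, π ω a) :
    ∀ ω a, 0 < ∑ a', π ω a' →
      ∑ ω', ∑ a', π ω' a' * p ω' a' ω * (π ω a / ∑ a'', π ω a'') = π ω a := by
  intro ω a hpos
  simp_rw [← Finset.sum_mul, hbal ω]
  exact mul_div_cancel₀ _ hpos.ne'

/-- If π satisfies the balance equations for kernel p, then π̂ = π is
invariant for the chain on Ω × A with transition p(ω'|ω,a)·σ(a'|ω'), where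
σ(a|ω) = π(ω,a)/∑_{a'} π(ω,a') whenever the denominator is positive. -/
theorem stmt_0 {Ω A : Type*} [Fintype Ω] [Fintype A] [Nonempty Ω] [Nonempty A]
    (p : Ω → A → Ω → ℝ) (π : Ω → A → ℝ)
    (hp0 : ∀ ω a ω', 0 ≤ p ω a ω') (hp1 : ∀ ω a, ∑ ω', p ω a ω' = 1)
    (hπ0 : ∀ ω a, 0 ≤ π ω a) (hπ1 : ∑ ω, ∑ a, π ω a = 1)
    (hbal : ∀ ω, ∑ ω', ∑ a', π ω' a' * p ω' a' ω = ∑ a, π ω a) :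
    ∀ ω a, 0 < ∑ a', π ω a' →
      ∑ ω', ∑ a', π ω' a' * p ω' a' ω * (π ω a / ∑ a'', π ω a'') = π ω a :=
  stmt_0_general p π hbal
end

section
/- (Continuity of Bayes' update) Let Ω be a finite set, χ : Ω → [0,1] a function (signaling probability), and π, π' ∈ Δ(Ω) with ∑_ω π(ω)χ(ω) > 0 and ∑_ω π'(ω)χ(ω) > 0. Define the posteriors ξ(ω) = π(ω)χ(ω)/∑_{ω'}π(ω')χ(ω') and ξ'(ω) = π'(ω)χ(ω)/∑_{ω'}π'(ω')χ(ω'). Then ‖ξ' − ξ‖₁ ≤ 2·(sup_{ω∈Ω} ξ(ω)/π(ω))·‖π' − π‖₁, where the sup is over ω with π(ω) > 0 (and finite by convention when ξ(ω)=0 whenever π(ω)=0). -/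
open Finset

/-- Writing `x / A - y / B = (x - y) / B + x * (1 / A - 1 / B)`, the second term sums in absolute
value to `|B - A| / B`, which is again at most `∑ |x - y| / B`. -/
theorem sum_abs_div_sum_sub_div_sum_le {ι : Type*} [Fintype ι] {x y : ι → ℝ}
    (hx : ∀ i, 0 ≤ x i) (hA : 0 < ∑ i, x i) (hB : 0 < ∑ i, y i) :
    ∑ i, |x i / ∑ j, x j - y i / ∑ j, y j| ≤ 2 * (∑ i, |x i - y i|) / ∑ j, y j := by
  set A := ∑ j, x j
  set B := ∑ j, y j
  have hsplit : ∀ i, x i / A - y i / B = (x i - y i) / B + x i * (1 / A - 1 / B) := by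
    intro i
    field_simp
    ring
  have hrescale : A * |1 / A - 1 / B| = |B - A| / B := by
    rw [← abs_of_pos hA, ← abs_mul, ← abs_of_pos hB, ← abs_div, abs_of_pos hA, abs_of_pos hB]
    congr 1
    field_simp
  have hdiff : |B - A| ≤ ∑ i, |x i - y i| := by
    rw [abs_sub_comm, ← sum_sub_distrib]
    exact abs_sum_le_sum_abs _ _
  calc ∑ i, |x i / A - y i / B|
      ≤ ∑ i, (|x i - y i| / B + x i * |1 / A - 1 / B|) := by
        refine sum_le_sum fun i _ => ?_
        rw [hsplit, ← abs_of_pos hB, ← abs_div, abs_of_pos hB]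
        refine (abs_add_le _ _).trans_eq ?_
        rw [abs_mul, abs_of_nonneg (hx i)]
    _ = (∑ i, |x i - y i|) / B + |B - A| / B := by
        rw [sum_add_distrib, ← sum_div, ← sum_mul, hrescale]
    _ ≤ 2 * (∑ i, |x i - y i|) / B := by
        rw [two_mul, add_div]
        gcongr

theorem stmt_4_general {Ω : Type*} [Fintype Ω] [Nonempty Ω]
    (χ : Ω → ℝ) (π π' : Ω → ℝ)
    (hχ : ∀ ω, 0 ≤ χ ω ∧ χ ω ≤ 1)
    (hπ'0 : ∀ ω, 0 ≤ π' ω)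
    (hD : 0 < ∑ ω, π ω * χ ω) (hD' : 0 < ∑ ω, π' ω * χ ω) :
    ∑ ω, |π' ω * χ ω / (∑ ω', π' ω' * χ ω') - π ω * χ ω / (∑ ω', π ω' * χ ω')|
      ≤ 2 * (Finset.univ.sup' Finset.univ_nonempty
               (fun ω => χ ω / ∑ ω', π ω' * χ ω'))
          * ∑ ω, |π' ω - π ω| := by
  set D := ∑ ω, π ω * χ ω
  set M := univ.sup' univ_nonempty (fun ω => χ ω / D)
  calc _ ≤ 2 * (∑ ω, |π' ω * χ ω - π ω * χ ω|) / D :=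
        sum_abs_div_sum_sub_div_sum_le (fun ω => mul_nonneg (hπ'0 ω) (hχ ω).1) hD' hD
    _ = 2 * ∑ ω, |π' ω - π ω| * (χ ω / D) := by
        rw [mul_div_assoc, sum_div]
        congr 1
        refine sum_congr rfl fun ω _ => ?_
        rw [← sub_mul, abs_mul, abs_of_nonneg (hχ ω).1, mul_div_assoc]
    _ ≤ 2 * ∑ ω, |π' ω - π ω| * M := by
        gcongr with ω
        exact le_sup' (fun ω => χ ω / D) (mem_univ ω)
    _ = 2 * M * ∑ ω, |π' ω - π ω| := by
        rw [← sum_mul]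
        ring

/-- Continuity of Bayes' update: the ℓ₁ distance between the posteriors
is at most 2·(sup_ω χ(ω)/∑_{ω'} π(ω')χ(ω'))·‖π' − π‖₁, where the supremum expression
equals sup_{ω ∈ supp π} ξ(ω)/π(ω). -/
theorem stmt_4 {Ω : Type*} [Fintype Ω] [Nonempty Ω]
    (χ : Ω → ℝ) (π π' : Ω → ℝ)
    (hχ : ∀ ω, 0 ≤ χ ω ∧ χ ω ≤ 1)
    (hπ0 : ∀ ω, 0 ≤ π ω) (hπ1 : ∑ ω, π ω = 1)
    (hπ'0 : ∀ ω, 0 ≤ π' ω) (hπ'1 : ∑ ω, π' ω = 1)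
    (hD : 0 < ∑ ω, π ω * χ ω) (hD' : 0 < ∑ ω, π' ω * χ ω)
    (hsupp : ∀ ω, π ω = 0 → π' ω * χ ω = 0) :
    ∑ ω, |π' ω * χ ω / (∑ ω', π' ω' * χ ω') - π ω * χ ω / (∑ ω', π ω' * χ ω')|
      ≤ 2 * (Finset.univ.sup' Finset.univ_nonempty
               (fun ω => χ ω / ∑ ω', π ω' * χ ω'))
          * ∑ ω, |π' ω - π ω| :=
  stmt_4_general χ π π' hχ hπ'0 hD hD'
end
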